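/- arXiv:1506.02649 — 7 statements merged into one kernel-verified Lean document; each statement's English description precedes it below -/
import Mathlib

section
/- Let A ∈ ℝ^{n×n} be positive definite, η > 0, and ρ ≥ 0. Let x₁, …, x_T ∈ ℝⁿ and g₁, …, g_T ∈ ℝᵖ with ‖g_t‖₂ ≤ ρ for all t. Let W* ∈ ℝ^{p×n}, W₁ = 0, and define iterates W_{t+1} = W_t − η g_t (A⁻¹ x_t)ᵀ with G_t = g_t x_tᵀ. Then Σ_{t=1}^{T} tr(G_tᵀ(W_t − W*)) ≤ (1/(2η)) · tr(A (W*)ᵀ W*) + (η ρ²/2) · tr(A⁻¹ Σ_{t=1}^{T} x_t x_tᵀ). -/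
/-!
With `D_t = W_t − W*`, the potential `Φ_t = tr(A D_tᵀ D_t)` is a squared `A`-weighted Frobenius
norm, hence nonnegative. Since `A (A⁻¹ x_t) = x_t`, expanding the square after one conditioned
step gives `2η tr(G_tᵀ D_t) = Φ_t − Φ_{t+1} + η² ‖g_t‖² x_tᵀ A⁻¹ x_t`; summing telescopes, and
`Φ_0 = tr(A W*ᵀ W*)`, `Φ_T ≥ 0`, `‖g_t‖² ≤ ρ²` give the bound.
-/

open Matrix

variable {m n : Type*} [Fintype m] [Fintype n]

lemma Matrix.PosSemidef.trace_mul_transpose_mul_self_nonneg {A : Matrix n n ℝ}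
    (hA : A.PosSemidef) (M : Matrix m n ℝ) : 0 ≤ (A * Mᵀ * M).trace := by
  rw [trace_mul_cycle, ← conjTranspose_eq_transpose_of_trivial]
  exact (hA.mul_mul_conjTranspose_same M).trace_nonneg

lemma Matrix.trace_mul_transpose_mul_sub_smul {R : Type*} [CommRing R] {A : Matrix n n R}
    (hA : A.IsSymm) (D U : Matrix m n R) (c : R) :
    (A * (D - c • U)ᵀ * (D - c • U)).trace
      = (A * Dᵀ * D).trace - 2 * c * (A * Uᵀ * D).trace + c ^ 2 * (A * Uᵀ * U).trace := by
  have hsymm : (A * Dᵀ * U).trace = (A * Uᵀ * D).trace := by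
    rw [← trace_transpose, transpose_mul, transpose_mul, transpose_transpose, hA.eq,
      ← Matrix.mul_assoc]
    exact trace_mul_cycle _ _ _
  simp only [transpose_sub, transpose_smul, Matrix.mul_sub, Matrix.sub_mul, Matrix.mul_smul,
    Matrix.smul_mul, trace_sub, trace_smul, hsymm, smul_eq_mul]
  ring

lemma Matrix.trace_conditioned_step {R : Type*} [CommRing R] {A : Matrix n n R}
    (hA : A.IsSymm) {x v : n → R} (hv : A *ᵥ v = x) (g : m → R) (W Wstar : Matrix m n R)
    (η : R) :
    2 * η * ((vecMulVec g x)ᵀ * (W - Wstar)).trace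
      = (A * (W - Wstar)ᵀ * (W - Wstar)).trace
        - (A * (W - η • vecMulVec g v - Wstar)ᵀ * (W - η • vecMulVec g v - Wstar)).trace
        + η ^ 2 * ((g ⬝ᵥ g) * (x ⬝ᵥ v)) := by
  have hAU : A * (vecMulVec g v)ᵀ = (vecMulVec g x)ᵀ := by
    rw [transpose_vecMulVec, transpose_vecMulVec, mul_vecMulVec, hv]
  have hquad : ((vecMulVec g x)ᵀ * vecMulVec g v).trace = (g ⬝ᵥ g) * (x ⬝ᵥ v) := by
    rw [transpose_vecMulVec, vecMulVec_mul_vecMulVec, trace_vecMulVec, dotProduct_smul,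
      smul_eq_mul]
  rw [sub_right_comm, trace_mul_transpose_mul_sub_smul hA, hAU, hquad]
  ring

lemma sum_le_of_two_mul_eq_sub_add {T : ℕ} {η : ℝ} (hη : 0 < η) (Φ : ℕ → ℝ) (a b : Fin T → ℝ)
    (hstep : ∀ t : Fin T, 2 * η * a t = Φ t - Φ (t + 1) + η ^ 2 * b t) (hΦ : 0 ≤ Φ T) :
    ∑ t, a t ≤ 1 / (2 * η) * Φ 0 + η / 2 * ∑ t, b t := by
  have htel : ∑ t : Fin T, (Φ t - Φ (t + 1)) = Φ 0 - Φ T := by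
    rw [Fin.sum_univ_eq_sum_range (fun k => Φ k - Φ (k + 1)), Finset.sum_range_sub']
  have hsum : 2 * η * ∑ t, a t = Φ 0 - Φ T + η ^ 2 * ∑ t, b t := by
    rw [Finset.mul_sum, Finset.mul_sum, Finset.sum_congr rfl fun t _ => hstep t,
      Finset.sum_add_distrib, htel]
  have hη2 : (0 : ℝ) < 2 * η := by positivity
  rw [← mul_le_mul_iff_right₀ hη2, hsum]
  field_simp
  nlinarith

theorem stmt1_general {n p : ℕ} (T : ℕ)
    (A : Matrix (Fin n) (Fin n) ℝ) (hA : A.PosDef)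
    (η ρ : ℝ) (hη : 0 < η)
    (x : Fin T → Fin n → ℝ) (g : Fin T → Fin p → ℝ)
    (hg : ∀ t : Fin T, Real.sqrt (∑ j, (g t j) ^ 2) ≤ ρ)
    (Wstar : Matrix (Fin p) (Fin n) ℝ)
    (W : ℕ → Matrix (Fin p) (Fin n) ℝ)
    (hW1 : W 0 = 0)
    (hWt : ∀ t : Fin T,
      W ((t : ℕ) + 1) = W (t : ℕ) - η • Matrix.vecMulVec (g t) (A⁻¹ *ᵥ x t))
    (G : Fin T → Matrix (Fin p) (Fin n) ℝ)
    (hG : ∀ t, G t = Matrix.vecMulVec (g t) (x t)) :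
    ∑ t : Fin T, ((G t)ᵀ * (W (t : ℕ) - Wstar)).trace
      ≤ (1 / (2 * η)) * (A * Wstarᵀ * Wstar).trace
        + (η * ρ ^ 2 / 2) * (A⁻¹ * ∑ t : Fin T, Matrix.vecMulVec (x t) (x t)).trace := by
  set q : Fin T → ℝ := fun t => x t ⬝ᵥ (A⁻¹ *ᵥ x t)
  have hAsymm : A.IsSymm := isHermitian_iff_isSymm.mp hA.isHermitian
  have hAinv : ∀ t, A *ᵥ (A⁻¹ *ᵥ x t) = x t := fun t => by
    rw [mulVec_mulVec, mul_nonsing_inv A hA.det_pos.ne'.isUnit, one_mulVec]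
  have hregret := sum_le_of_two_mul_eq_sub_add hη
    (fun k => (A * (W k - Wstar)ᵀ * (W k - Wstar)).trace)
    (fun t => ((G t)ᵀ * (W t - Wstar)).trace) (fun t => (g t ⬝ᵥ g t) * q t)
    (fun t => by simp only [hG, hWt, q, trace_conditioned_step hAsymm (hAinv t)])
    (hA.posSemidef.trace_mul_transpose_mul_self_nonneg _)
  have hq : ∀ t, 0 ≤ q t := fun t => by
    simpa using hA.posSemidef.inv.dotProduct_mulVec_nonneg (x t)
  have hg2 : ∀ t, g t ⬝ᵥ g t ≤ ρ ^ 2 := fun t => by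
    simpa [dotProduct, sq] using (Real.sqrt_le_iff.mp (hg t)).2
  have htrace : (A⁻¹ * ∑ t, vecMulVec (x t) (x t)).trace = ∑ t, q t := by
    simp only [Matrix.mul_sum, trace_sum, mul_vecMulVec, trace_vecMulVec, q, dotProduct_comm]
  simp only [hW1, zero_sub, transpose_neg, Matrix.mul_neg, Matrix.neg_mul, neg_neg] at hregret
  calc _ ≤ 1 / (2 * η) * (A * Wstarᵀ * Wstar).trace + η / 2 * ∑ t, (g t ⬝ᵥ g t) * q t :=
        hregret
    _ ≤ 1 / (2 * η) * (A * Wstarᵀ * Wstar).trace + η / 2 * ∑ t, ρ ^ 2 * q t := by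
        gcongr with t; exacts [hq t, hg2 t]
    _ = _ := by rw [htrace, ← Finset.mul_sum]; ring

/-- Regret-type bound for conditioned SGD iterates:
if `W₁ = 0` and `W_{t+1} = W_t − η g_t (A⁻¹ x_t)ᵀ` with `‖g_t‖₂ ≤ ρ`, then
`Σ_t tr(G_tᵀ(W_t − W*)) ≤ (1/(2η)) tr(A (W*)ᵀ W*) + (ηρ²/2) tr(A⁻¹ Σ_t x_t x_tᵀ)`. -/
theorem stmt1 {n p : ℕ} (T : ℕ)
    (A : Matrix (Fin n) (Fin n) ℝ) (hA : A.PosDef)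
    (η ρ : ℝ) (hη : 0 < η) (hρ : 0 ≤ ρ)
    (x : Fin T → Fin n → ℝ) (g : Fin T → Fin p → ℝ)
    (hg : ∀ t : Fin T, Real.sqrt (∑ j, (g t j) ^ 2) ≤ ρ)
    (Wstar : Matrix (Fin p) (Fin n) ℝ)
    (W : ℕ → Matrix (Fin p) (Fin n) ℝ)
    (hW1 : W 0 = 0)
    (hWt : ∀ t : Fin T,
      W ((t : ℕ) + 1) = W (t : ℕ) - η • Matrix.vecMulVec (g t) (A⁻¹ *ᵥ x t))
    (G : Fin T → Matrix (Fin p) (Fin n) ℝ)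
    (hG : ∀ t, G t = Matrix.vecMulVec (g t) (x t)) :
    ∑ t : Fin T, ((G t)ᵀ * (W (t : ℕ) - Wstar)).trace
      ≤ (1 / (2 * η)) * (A * Wstarᵀ * Wstar).trace
        + (η * ρ ^ 2 / 2) * (A⁻¹ * ∑ t : Fin T, Matrix.vecMulVec (x t) (x t)).trace :=
  stmt1_general T A hA η ρ hη x g hg Wstar W hW1 hWt G hG
end

section
/- Fix a positive definite matrix A ∈ ℝ^{n×n}. Let x₁,…,x_m ∈ ℝⁿ, and for each i let ℓ_{y_i} : ℝᵖ → ℝ be convex and ρ-Lipschitz. Let L(W) = (1/m) Σ_{i=1}^m ℓ_{y_i}(W x_i), let W* be a minimizer of L, and let C = (1/m) Σ_{i=1}^m x_i x_iᵀ. Run conditioned SGD for T steps starting from W₁ = 0: at each step t, draw i_t uniformly and independently from {1,…,m} and set W_{t+1} = W_t − η g_t (A⁻¹ x_{i_t})ᵀ, where g_t ∈ ℝᵖ is a subgradient of ℓ_{y_{i_t}} at W_t x_{i_t}. Let W̄ = (1/T) Σ_{t=1}^T W_t. Then E[L(W̄) − L(W*)] ≤ (1/(2ηT)) · tr(A (W*)ᵀ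 W*) + (η ρ²/2) · tr(A⁻¹ C), where the expectation is over the i.i.d. uniform random indices i₁,…,i_T. -/
/-!
Conditioned SGD is online subgradient descent in the norm `‖M‖²_A = tr(A Mᵀ M)` (`traceNormSq`).
Expanding this norm along one step and using the subgradient inequality together with `‖g‖ ≤ ρ`
(which follows from `ρ`-Lipschitz continuity) gives
`2η (ℓ(W_t x) - ℓ(W* x)) ≤ ‖W_t - W*‖²_A - ‖W_{t+1} - W*‖²_A + η²ρ² xᵀA⁻¹x`,
and summing over `t` telescopes. Since `W_t` depends only on `i_1, …, i_{t-1}`, averaging over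
`i_t` turns the sampled losses into `L(W_t) - L(W*)` and `x_{i_t}ᵀA⁻¹x_{i_t}` into `tr(A⁻¹C)`;
Jensen's inequality bounds `L(W̄)` by the average of the `L(W_t)`.
-/

open Matrix BigOperators

section TraceNorm
variable {k l : Type*} [Fintype k] [Fintype l]

def traceNormSq (A : Matrix l l ℝ) (M : Matrix k l ℝ) : ℝ := (A * Mᵀ * M).trace

lemma traceNormSq_nonneg {A : Matrix l l ℝ} (hA : A.PosSemidef) (M : Matrix k l ℝ) :
    0 ≤ traceNormSq A M := by
  rw [traceNormSq, trace_mul_comm, ← Matrix.mul_assoc]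
  simpa using (hA.mul_mul_conjTranspose_same M).trace_nonneg

@[simp]
lemma traceNormSq_neg (A : Matrix l l ℝ) (M : Matrix k l ℝ) :
    traceNormSq A (-M) = traceNormSq A M := by
  simp [traceNormSq]

lemma traceNormSq_sub_smul_vecMulVec {A : Matrix l l ℝ} (hA : A.IsSymm) (U : Matrix k l ℝ)
    (η : ℝ) (g : k → ℝ) (w : l → ℝ) :
    traceNormSq A (U - η • vecMulVec g w)
      = traceNormSq A U - 2 * η * (g ⬝ᵥ (U *ᵥ (A *ᵥ w)))
        + η ^ 2 * ((g ⬝ᵥ g) * (w ⬝ᵥ (A *ᵥ w))) := by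
  have cross : (A * Uᵀ * vecMulVec g w).trace = (A * (vecMulVec g w)ᵀ * U).trace := by
    rw [← trace_transpose]
    simp only [transpose_mul, transpose_transpose, hA.eq, Matrix.mul_assoc]
    rw [← Matrix.mul_assoc, trace_mul_comm]
  have hcross : (A * (vecMulVec g w)ᵀ * U).trace = g ⬝ᵥ (U *ᵥ (A *ᵥ w)) := by
    rw [transpose_vecMulVec, mul_vecMulVec, vecMulVec_mul, trace_vecMulVec, dotProduct_comm,
      ← dotProduct_mulVec]
  have hquad : (A * (vecMulVec g w)ᵀ * vecMulVec g w).trace = (g ⬝ᵥ g) * (w ⬝ᵥ (A *ᵥ w)) := by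
    rw [transpose_vecMulVec, Matrix.mul_assoc, vecMulVec_mul_vecMulVec, mul_vecMulVec,
      trace_vecMulVec, dotProduct_smul, smul_eq_mul, dotProduct_comm (A *ᵥ w)]
  simp only [traceNormSq, transpose_sub, transpose_smul, Matrix.sub_mul, Matrix.mul_sub,
    Matrix.smul_mul, Matrix.mul_smul, trace_sub, trace_smul, smul_eq_mul, cross, hcross, hquad]
  ring

end TraceNorm

lemma dotProduct_self_le_sq_of_subgradient {ι : Type*} [Fintype ι] {f : (ι → ℝ) → ℝ} {ρ : ℝ}
    (hf : ∀ u v, |f u - f v| ≤ ρ * √(∑ j, (u j - v j) ^ 2)) {a g : ι → ℝ}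
    (hg : ∀ u, f a + g ⬝ᵥ (u - a) ≤ f u) : g ⬝ᵥ g ≤ ρ ^ 2 := by
  have hle : g ⬝ᵥ g ≤ ρ * √(g ⬝ᵥ g) := by
    have h1 := hg (a + g)
    have h2 := (le_abs_self _).trans (hf (a + g) a)
    have hsq : ∑ j, ((a + g) j - a j) ^ 2 = g ⬝ᵥ g := by simp [dotProduct, sq]
    rw [add_sub_cancel_left] at h1
    rw [hsq] at h2
    linarith
  have hnn : 0 ≤ g ⬝ᵥ g := by
    simpa [dotProduct, ← sq] using Finset.sum_nonneg fun j _ => sq_nonneg (g j)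
  nlinarith [Real.sq_sqrt hnn, Real.sqrt_nonneg (g ⬝ᵥ g), sq_nonneg (ρ - √(g ⬝ᵥ g))]

section ConditionedDescent
variable {k l : Type*} [Fintype k] [Fintype l] [DecidableEq l] {A : Matrix l l ℝ}

lemma two_mul_sub_le_traceNormSq_sub {f : (k → ℝ) → ℝ} {M M' : Matrix k l ℝ} {v : l → ℝ}
    {γ : k → ℝ} {ρ η : ℝ} (hA : A.PosDef) (hη : 0 ≤ η)
    (hsub : ∀ u, f (M *ᵥ v) + γ ⬝ᵥ (u - M *ᵥ v) ≤ f u) (hγ : γ ⬝ᵥ γ ≤ ρ ^ 2) :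
    2 * η * (f (M *ᵥ v) - f (M' *ᵥ v))
      ≤ traceNormSq A (M - M') - traceNormSq A (M - η • vecMulVec γ (A⁻¹ *ᵥ v) - M')
        + η ^ 2 * ρ ^ 2 * (v ⬝ᵥ (A⁻¹ *ᵥ v)) := by
  have hsymm : A.IsSymm := (conjTranspose_eq_transpose_of_trivial A).symm.trans hA.isHermitian
  have hAA : A *ᵥ (A⁻¹ *ᵥ v) = v := by
    rw [mulVec_mulVec, mul_nonsing_inv _ ((isUnit_iff_isUnit_det A).1 hA.isUnit), one_mulVec]
  have hq : 0 ≤ v ⬝ᵥ (A⁻¹ *ᵥ v) := by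
    simpa using hA.posSemidef.inv.dotProduct_mulVec_nonneg v
  have hlin : f (M *ᵥ v) - f (M' *ᵥ v) ≤ γ ⬝ᵥ ((M - M') *ᵥ v) := by
    have := hsub (M' *ᵥ v)
    rw [dotProduct_sub] at this
    rw [sub_mulVec, dotProduct_sub]
    linarith
  have hquad : η ^ 2 * ((γ ⬝ᵥ γ) * (v ⬝ᵥ (A⁻¹ *ᵥ v))) ≤ η ^ 2 * ρ ^ 2 * (v ⬝ᵥ (A⁻¹ *ᵥ v)) := by
    rw [← mul_assoc (η ^ 2)]
    gcongr
  rw [show M - η • vecMulVec γ (A⁻¹ *ᵥ v) - M' = (M - M') - η • vecMulVec γ (A⁻¹ *ᵥ v) by abel,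
    traceNormSq_sub_smul_vecMulVec hsymm, hAA, dotProduct_comm (A⁻¹ *ᵥ v)]
  nlinarith [mul_le_mul_of_nonneg_left hlin (by positivity : (0 : ℝ) ≤ 2 * η)]

theorem two_mul_sum_sub_le_of_conditioned_descent {T : ℕ} {f : Fin T → (k → ℝ) → ℝ}
    {v : Fin T → l → ℝ} {γ : Fin T → k → ℝ} {w : ℕ → Matrix k l ℝ} {M' : Matrix k l ℝ}
    {ρ η : ℝ} (hA : A.PosDef) (hη : 0 ≤ η)
    (hsub : ∀ t u, f t (w t *ᵥ v t) + γ t ⬝ᵥ (u - w t *ᵥ v t) ≤ f t u)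
    (hγ : ∀ t, γ t ⬝ᵥ γ t ≤ ρ ^ 2)
    (hw : ∀ t : Fin T, w (t + 1) = w t - η • vecMulVec (γ t) (A⁻¹ *ᵥ v t)) :
    2 * η * ∑ t, (f t (w t *ᵥ v t) - f t (M' *ᵥ v t))
      ≤ traceNormSq A (w 0 - M') + η ^ 2 * ρ ^ 2 * ∑ t, v t ⬝ᵥ (A⁻¹ *ᵥ v t) := by
  set D : ℕ → ℝ := fun t => traceNormSq A (w t - M')
  calc 2 * η * ∑ t, (f t (w t *ᵥ v t) - f t (M' *ᵥ v t))
      ≤ ∑ t : Fin T, (D t - D (t + 1) + η ^ 2 * ρ ^ 2 * (v t ⬝ᵥ (A⁻¹ *ᵥ v t))) := by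
        rw [Finset.mul_sum]
        refine Finset.sum_le_sum fun t _ => ?_
        simpa only [D, hw t] using two_mul_sub_le_traceNormSq_sub hA hη (hsub t) (hγ t)
    _ = D 0 - D T + η ^ 2 * ρ ^ 2 * ∑ t, v t ⬝ᵥ (A⁻¹ *ᵥ v t) := by
        rw [Finset.sum_add_distrib, Fin.sum_univ_eq_sum_range (fun t => D t - D (t + 1)),
          Finset.sum_range_sub', Finset.mul_sum]
    _ ≤ D 0 + η ^ 2 * ρ ^ 2 * ∑ t, v t ⬝ᵥ (A⁻¹ *ᵥ v t) := by
        linarith [traceNormSq_nonneg hA.posSemidef (w T - M')]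

theorem expect_sub_le_of_conditioned_descent {T : ℕ} [NeZero T] {f : Fin T → (k → ℝ) → ℝ}
    {v : Fin T → l → ℝ} {γ : Fin T → k → ℝ} {w : ℕ → Matrix k l ℝ} {M' : Matrix k l ℝ}
    {ρ η : ℝ} (hA : A.PosDef) (hη : 0 < η)
    (hsub : ∀ t u, f t (w t *ᵥ v t) + γ t ⬝ᵥ (u - w t *ᵥ v t) ≤ f t u)
    (hγ : ∀ t, γ t ⬝ᵥ γ t ≤ ρ ^ 2)
    (hw : ∀ t : Fin T, w (t + 1) = w t - η • vecMulVec (γ t) (A⁻¹ *ᵥ v t)) :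
    𝔼 t, (f t (w t *ᵥ v t) - f t (M' *ᵥ v t))
      ≤ traceNormSq A (w 0 - M') / (2 * η * T)
        + η * ρ ^ 2 / 2 * 𝔼 t, v t ⬝ᵥ (A⁻¹ *ᵥ v t) := by
  have h := two_mul_sum_sub_le_of_conditioned_descent (M' := M') hA hη.le hsub hγ hw
  have hT : (0 : ℝ) < T := by exact_mod_cast Nat.pos_of_neZero T
  rw [Fintype.expect_eq_sum_div_card, Fintype.expect_eq_sum_div_card, Fintype.card_fin,
    div_le_iff₀ hT]
  calc _ ≤ (traceNormSq A (w 0 - M') + η ^ 2 * ρ ^ 2 * ∑ t, v t ⬝ᵥ (A⁻¹ *ᵥ v t)) / (2 * η) := by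
        rw [le_div_iff₀ (by positivity)]; linarith
    _ = _ := by field_simp

end ConditionedDescent

open Function in
theorem Fintype.expect_apply_eval_of_update {ι α M : Type*} [Fintype ι] [DecidableEq ι]
    [Fintype α] [AddCommMonoid M] [Module ℚ≥0 M] (F : (ι → α) → α → M) (t : ι)
    (hF : ∀ ω a, F (update ω t a) = F ω) :
    𝔼 ω, F ω (ω t) = 𝔼 ω, 𝔼 a, F ω a := by
  rcases isEmpty_or_nonempty α with hα | hα
  · have : IsEmpty (ι → α) := ⟨fun ω => hα.elim (ω t)⟩
    simp
  have hswap : Involutive fun p : (ι → α) × α => (update p.1 t p.2, p.1 t) := by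
    rintro ⟨ω, a⟩
    simp
  calc 𝔼 ω, F ω (ω t) = 𝔼 p : (ι → α) × α, F p.1 (p.1 t) := by
        rw [← Finset.univ_product_univ, Finset.expect_product' (f := fun ω (_ : α) => F ω (ω t))]
        simp only [Fintype.expect_const]
    _ = 𝔼 p : (ι → α) × α, F p.1 p.2 :=
        (Fintype.expect_bijective _ hswap.bijective _ _ fun p => by simp [hF]).symm
    _ = 𝔼 ω, 𝔼 a, F ω a := by
        rw [← Finset.univ_product_univ, Finset.expect_product']

section Recursion
variable {α β : Type*} {T : ℕ} {W : (Fin T → α) → ℕ → β} {w₀ : β} {step : β → α → β}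

open Function in
lemma apply_update_of_le (h0 : ∀ ω, W ω 0 = w₀)
    (hstep : ∀ ω (t : Fin T), W ω (t + 1) = step (W ω t) (ω t)) (ω : Fin T → α) (s : Fin T)
    (a : α) : ∀ t ≤ (s : ℕ), W (update ω s a) t = W ω t
  | 0, _ => by rw [h0, h0]
  | t + 1, ht => by
    have htT : t < T := by omega
    rw [(hstep _ ⟨t, htT⟩ : W _ (t + 1) = _), (hstep ω ⟨t, htT⟩ : W ω (t + 1) = _),
      apply_update_of_le h0 hstep ω s a t (by omega),
      update_of_ne (Fin.ne_of_val_ne (by simp; omega))]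

lemma expect_expect_apply_eval_of_recursion [Fintype α] {M : Type*} [AddCommMonoid M]
    [Module ℚ≥0 M] (h0 : ∀ ω, W ω 0 = w₀)
    (hstep : ∀ ω (t : Fin T), W ω (t + 1) = step (W ω t) (ω t)) (F : β → α → M) :
    𝔼 ω, 𝔼 t : Fin T, F (W ω t) (ω t) = 𝔼 ω, 𝔼 t : Fin T, 𝔼 a, F (W ω t) a := by
  rw [Finset.expect_comm _ _ fun ω (t : Fin T) => F (W ω t) (ω t),
    Finset.expect_comm _ _ fun ω (t : Fin T) => 𝔼 a, F (W ω t) a]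
  refine Finset.expect_congr rfl fun t _ => ?_
  exact Fintype.expect_apply_eval_of_update (fun ω => F (W ω t)) t fun ω a => by
    rw [apply_update_of_le h0 hstep ω t a t le_rfl]

end Recursion

lemma ConvexOn.map_smul_sum_le_expect {E ι : Type*} [AddCommGroup E] [Module ℝ E] [Fintype ι]
    [Nonempty ι] {f : E → ℝ} (hf : ConvexOn ℝ Set.univ f) (v : ι → E) :
    f ((Fintype.card ι : ℝ)⁻¹ • ∑ i, v i) ≤ 𝔼 i, f (v i) := by
  rw [Finset.smul_sum, Fintype.expect_eq_sum_div_card, Finset.sum_div]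
  simpa [div_eq_inv_mul] using
    hf.map_sum_le (t := Finset.univ) (w := fun _ => (Fintype.card ι : ℝ)⁻¹)
      (fun _ _ => by positivity) (by simp) (fun _ _ => Set.mem_univ _)

lemma expect_apply_mulVec_smul_sum_le {ι τ k l : Type*} [Fintype ι] [Fintype τ] [Nonempty τ]
    [Fintype l] {ℓ : ι → (k → ℝ) → ℝ} (hℓ : ∀ i, ConvexOn ℝ Set.univ (ℓ i)) (x : ι → l → ℝ)
    (W : τ → Matrix k l ℝ) :
    𝔼 i, ℓ i (((Fintype.card τ : ℝ)⁻¹ • ∑ t, W t) *ᵥ x i) ≤ 𝔼 t, 𝔼 i, ℓ i (W t *ᵥ x i) := by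
  rw [Finset.expect_comm]
  refine Finset.expect_le_expect fun i _ => ?_
  simpa [smul_mulVec, sum_mulVec] using (hℓ i).map_smul_sum_le_expect fun t => W t *ᵥ x i

lemma trace_mul_smul_sum_vecMulVec_self {ι l : Type*} [Fintype ι] [Fintype l]
    (B : Matrix l l ℝ) (x : ι → l → ℝ) :
    (B * ((1 / (Fintype.card ι : ℝ)) • ∑ i, vecMulVec (x i) (x i))).trace
      = 𝔼 i, x i ⬝ᵥ (B *ᵥ x i) := by
  simp [Matrix.mul_sum, trace_sum, mul_vecMulVec, Fintype.expect_eq_sum_div_card,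
    dotProduct_comm, div_eq_inv_mul]

theorem stmt2_general {n p m : ℕ} (hm : 0 < m)
    (A : Matrix (Fin n) (Fin n) ℝ) (hA : A.PosDef)
    (x : Fin m → Fin n → ℝ) (ρ : ℝ)
    (ℓ : Fin m → (Fin p → ℝ) → ℝ)
    (hconv : ∀ i, ConvexOn ℝ Set.univ (ℓ i))
    (hlip : ∀ i, ∀ u v : Fin p → ℝ,
      |ℓ i u - ℓ i v| ≤ ρ * Real.sqrt (∑ j, (u j - v j) ^ 2))
    (L : Matrix (Fin p) (Fin n) ℝ → ℝ)
    (hL : ∀ W, L W = (1 / (m : ℝ)) * ∑ i, ℓ i (W *ᵥ x i))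
    (Wstar : Matrix (Fin p) (Fin n) ℝ)
    (C : Matrix (Fin n) (Fin n) ℝ)
    (hC : C = (1 / (m : ℝ)) • ∑ i, Matrix.vecMulVec (x i) (x i))
    (η : ℝ) (hη : 0 < η) (T : ℕ) (hT : 0 < T)
    (g : Matrix (Fin p) (Fin n) ℝ → Fin m → (Fin p → ℝ))
    (hg : ∀ W i, ∀ u : Fin p → ℝ,
      ℓ i (W *ᵥ x i) + ∑ j, g W i j * (u j - (W *ᵥ x i) j) ≤ ℓ i u)
    (W : (Fin T → Fin m) → ℕ → Matrix (Fin p) (Fin n) ℝ)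
    (hW0 : ∀ ω, W ω 0 = 0)
    (hWt : ∀ ω (t : Fin T),
      W ω ((t : ℕ) + 1)
        = W ω (t : ℕ)
          - η • Matrix.vecMulVec (g (W ω (t : ℕ)) (ω t)) (A⁻¹ *ᵥ x (ω t))) :
    (∑ ω : Fin T → Fin m,
        (L ((T : ℝ)⁻¹ • ∑ t : Fin T, W ω (t : ℕ)) - L Wstar)) / (m : ℝ) ^ T
      ≤ (1 / (2 * η * T)) * (A * Wstarᵀ * Wstar).trace
        + (η * ρ ^ 2 / 2) * (A⁻¹ * C).trace := by
  have : Nonempty (Fin m) := ⟨⟨0, hm⟩⟩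
  have : NeZero T := ⟨hT.ne'⟩
  set q : Fin m → ℝ := fun i => x i ⬝ᵥ (A⁻¹ *ᵥ x i)
  have hLexp (M) : L M = 𝔼 i, ℓ i (M *ᵥ x i) := by
    rw [hL, Fintype.expect_eq_sum_div_card, Fintype.card_fin, one_div_mul_eq_div]
  have htrace : (A⁻¹ * C).trace = 𝔼 i, q i := by
    simpa [hC] using trace_mul_smul_sum_vecMulVec_self A⁻¹ x
  have hjensen (ω : Fin T → Fin m) :
      L ((T : ℝ)⁻¹ • ∑ t : Fin T, W ω t) ≤ 𝔼 t : Fin T, L (W ω t) := by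
    simpa [hLexp] using expect_apply_mulVec_smul_sum_le hconv x fun t : Fin T => W ω t
  have hregret (ω : Fin T → Fin m) :
      𝔼 t : Fin T, (ℓ (ω t) (W ω t *ᵥ x (ω t)) - ℓ (ω t) (Wstar *ᵥ x (ω t)))
        ≤ traceNormSq A Wstar / (2 * η * T) + η * ρ ^ 2 / 2 * 𝔼 t : Fin T, q (ω t) := by
    simpa [hW0, q] using expect_sub_le_of_conditioned_descent (M' := Wstar) hA hη
      (fun t u => hg (W ω t) (ω t) u)
      (fun t => dotProduct_self_le_sq_of_subgradient (hlip (ω t)) (hg (W ω t) (ω t))) (hWt ω)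
  have hmarginal : 𝔼 ω : Fin T → Fin m, 𝔼 t : Fin T, q (ω t) = 𝔼 i, q i := by
    rw [Finset.expect_comm]
    simp [Fintype.expect_apply_eval_of_update (fun _ i => q i)]
  rw [show (m : ℝ) ^ T = Fintype.card (Fin T → Fin m) by simp, ← Fintype.expect_eq_sum_div_card]
  calc 𝔼 ω, (L ((T : ℝ)⁻¹ • ∑ t : Fin T, W ω t) - L Wstar)
      ≤ 𝔼 ω, 𝔼 t : Fin T, (L (W ω t) - L Wstar) := by
        refine Finset.expect_le_expect fun ω _ => ?_
        simpa [Finset.expect_sub_distrib] using hjensen ω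
    _ = 𝔼 ω, 𝔼 t : Fin T, (ℓ (ω t) (W ω t *ᵥ x (ω t)) - ℓ (ω t) (Wstar *ᵥ x (ω t))) := by
        simp only [hLexp, ← Finset.expect_sub_distrib]
        exact (expect_expect_apply_eval_of_recursion hW0
          (step := fun M i => M - η • vecMulVec (g M i) (A⁻¹ *ᵥ x i)) hWt
          fun M i => ℓ i (M *ᵥ x i) - ℓ i (Wstar *ᵥ x i)).symm
    _ ≤ 𝔼 ω : Fin T → Fin m, (traceNormSq A Wstar / (2 * η * T)
          + η * ρ ^ 2 / 2 * 𝔼 t : Fin T, q (ω t)) :=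
        Finset.expect_le_expect fun ω _ => hregret ω
    _ = _ := by
        rw [Finset.expect_add_distrib, ← Finset.mul_expect, hmarginal, htrace,
          Fintype.expect_const, traceNormSq]
        ring

/-- Lemma 1 of the paper, first bound. Conditioned SGD with a fixed
positive definite conditioner `A`, started from `W₁ = 0`, on the objective
`L(W) = (1/m) Σᵢ ℓᵢ(W xᵢ)` with convex `ρ`-Lipschitz losses, satisfies
`E[L(W̄) − L(W*)] ≤ (1/(2ηT)) tr(A (W*)ᵀ W*) + (ηρ²/2) tr(A⁻¹ C)`,
where the expectation is the average over all sequences `ω : Fin T → Fin m` of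
i.i.d. uniform indices, `W̄ = (1/T) Σ_t W_t`, and `C = (1/m) Σᵢ xᵢ xᵢᵀ`.
Subgradients are given by a selection `g W i` of a subgradient of `ℓᵢ` at `W xᵢ`. -/
theorem stmt2 {n p m : ℕ} (hm : 0 < m)
    (A : Matrix (Fin n) (Fin n) ℝ) (hA : A.PosDef)
    (x : Fin m → Fin n → ℝ) (ρ : ℝ)
    (ℓ : Fin m → (Fin p → ℝ) → ℝ)
    (hconv : ∀ i, ConvexOn ℝ Set.univ (ℓ i))
    (hlip : ∀ i, ∀ u v : Fin p → ℝ,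
      |ℓ i u - ℓ i v| ≤ ρ * Real.sqrt (∑ j, (u j - v j) ^ 2))
    (L : Matrix (Fin p) (Fin n) ℝ → ℝ)
    (hL : ∀ W, L W = (1 / (m : ℝ)) * ∑ i, ℓ i (W *ᵥ x i))
    (Wstar : Matrix (Fin p) (Fin n) ℝ)
    (hWstar : ∀ W, L Wstar ≤ L W)
    (C : Matrix (Fin n) (Fin n) ℝ)
    (hC : C = (1 / (m : ℝ)) • ∑ i, Matrix.vecMulVec (x i) (x i))
    (η : ℝ) (hη : 0 < η) (T : ℕ) (hT : 0 < T)
    (g : Matrix (Fin p) (Fin n) ℝ → Fin m → (Fin p → ℝ))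
    (hg : ∀ W i, ∀ u : Fin p → ℝ,
      ℓ i (W *ᵥ x i) + ∑ j, g W i j * (u j - (W *ᵥ x i) j) ≤ ℓ i u)
    (W : (Fin T → Fin m) → ℕ → Matrix (Fin p) (Fin n) ℝ)
    (hW0 : ∀ ω, W ω 0 = 0)
    (hWt : ∀ ω (t : Fin T),
      W ω ((t : ℕ) + 1)
        = W ω (t : ℕ)
          - η • Matrix.vecMulVec (g (W ω (t : ℕ)) (ω t)) (A⁻¹ *ᵥ x (ω t))) :
    (∑ ω : Fin T → Fin m,
        (L ((T : ℝ)⁻¹ • ∑ t : Fin T, W ω (t : ℕ)) - L Wstar)) / (m : ℝ) ^ T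
      ≤ (1 / (2 * η * T)) * (A * Wstarᵀ * Wstar).trace
        + (η * ρ ^ 2 / 2) * (A⁻¹ * C).trace :=
  stmt2_general hm A hA x ρ ℓ hconv hlip L hL Wstar C hC η hη T hT g hg W hW0 hWt
end

section
/- Let C ∈ ℝ^{n×n} be symmetric positive definite. Then over all symmetric positive definite matrices A ∈ ℝ^{n×n}, the quantity tr(A) + tr(A⁻¹ C) is minimized by A = C^{1/2}, and the minimum value is 2·tr(C^{1/2}). In particular, for every symmetric positive definite A, tr(A) + tr(A⁻¹ C) ≥ 2·tr(C^{1/2}). -/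
open Matrix

/-!
Completing the square: for invertible `A`,
`tr A + tr (A⁻¹ S²) - 2 tr S = tr ((A - S) A⁻¹ (A - S))`, and for positive definite `A` and
Hermitian `S` the right-hand side is the trace of the positive semidefinite matrix
`(A - S) A⁻¹ (A - S)ᴴ`. At `A = S` the square vanishes.
-/

namespace Matrix

variable {ι R : Type*} [Fintype ι] [DecidableEq ι]

theorem trace_sub_mul_inv_mul_sub [CommRing R] {A : Matrix ι ι R} (hA : IsUnit A.det)
    (S : Matrix ι ι R) :
    ((A - S) * A⁻¹ * (A - S)).trace = A.trace + (A⁻¹ * (S * S)).trace - 2 * S.trace := by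
  have hcycle : ((A - S) * A⁻¹ * (A - S)).trace = (A⁻¹ * (A - S) * (A - S)).trace := by
    rw [mul_assoc, trace_mul_comm, mul_assoc]
  have hconj : (A⁻¹ * S * A).trace = S.trace := by
    rw [trace_mul_comm, ← mul_assoc, mul_nonsing_inv A hA, one_mul]
  have hexpand : A⁻¹ * (A - S) * (A - S) = A - S - A⁻¹ * S * A + A⁻¹ * (S * S) := by
    rw [mul_sub A⁻¹, nonsing_inv_mul A hA]
    noncomm_ring
  rw [hcycle, hexpand, trace_add, trace_sub, trace_sub, hconj]
  ring

open scoped ComplexOrder in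
theorem two_mul_trace_le_trace_add_trace_inv_mul_sq {𝕜 : Type*} [RCLike 𝕜]
    {A S : Matrix ι ι 𝕜} (hA : A.PosDef) (hS : S.IsHermitian) :
    2 * S.trace ≤ A.trace + (A⁻¹ * (S * S)).trace := by
  have hsquare : 0 ≤ ((A - S) * A⁻¹ * (A - S)).trace := by
    simpa only [(hA.isHermitian.sub hS).eq] using
      (hA.inv.posSemidef.mul_mul_conjTranspose_same (A - S)).trace_nonneg
  rw [trace_sub_mul_inv_mul_sub hA.det_pos.ne'.isUnit] at hsquare
  exact sub_nonneg.mp hsquare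

end Matrix

theorem stmt5_general {n : ℕ}
    (C S : Matrix (Fin n) (Fin n) ℝ)
    (hS : S.PosDef) (hSsq : S * S = C) :
    (∀ A : Matrix (Fin n) (Fin n) ℝ, A.PosDef →
        2 * S.trace ≤ A.trace + (A⁻¹ * C).trace)
      ∧ S.trace + (S⁻¹ * C).trace = 2 * S.trace := by
  subst hSsq
  refine ⟨fun A hA => two_mul_trace_le_trace_add_trace_inv_mul_sq hA hS.isHermitian, ?_⟩
  rw [← mul_assoc, nonsing_inv_mul S hS.det_pos.ne'.isUnit, one_mul]
  ring

/-- For a symmetric positive definite `C` with positive definite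
square root `S` (i.e. `S * S = C`), the quantity `tr(A) + tr(A⁻¹ C)` over symmetric
positive definite `A` is minimized by `A = S = C^{1/2}`, with minimum value
`2 tr(C^{1/2})`: every such `A` satisfies `tr(A) + tr(A⁻¹ C) ≥ 2 tr(C^{1/2})`,
and `A = S` attains the value `2 tr(S)`. -/
theorem stmt5 {n : ℕ}
    (C S : Matrix (Fin n) (Fin n) ℝ)
    (hC : C.PosDef) (hS : S.PosDef) (hSsq : S * S = C) :
    (∀ A : Matrix (Fin n) (Fin n) ℝ, A.PosDef →
        2 * S.trace ≤ A.trace + (A⁻¹ * C).trace)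
      ∧ S.trace + (S⁻¹ * C).trace = 2 * S.trace :=
  stmt5_general C S hS hSsq
end

section
/- Let C ∈ ℝ^{n×n} be symmetric positive definite. Then min over symmetric positive definite M with tr(M) ≤ 1 of tr(M⁻¹ C) equals (tr(C^{1/2}))², and the minimum is attained by M* = (tr(C^{1/2}))⁻¹ · C^{1/2}. In particular, for every symmetric positive definite M with tr(M) ≤ 1, tr(M⁻¹ C) ≥ (tr(C^{1/2}))². -/
/-!
Write `M = T²` with `T = M^{1/2}`. Then `tr S = tr (T · T⁻¹S)`, and Cauchy–Schwarz for the
Frobenius inner product gives `(tr S)² ≤ tr (T Tᵀ) · tr ((T⁻¹S)ᵀ T⁻¹S) = tr M · tr (M⁻¹ C)`,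
which is at most `tr (M⁻¹ C)` when `tr M ≤ 1`. For `M = S / tr S` both sides equal `(tr S)²`.
-/

open Matrix BigOperators

open scoped MatrixOrder

namespace Matrix

variable {ι : Type*} [Fintype ι]

lemma sq_trace_mul_le {κ : Type*} [Fintype κ] (A : Matrix ι κ ℝ) (B : Matrix κ ι ℝ) :
    (A * B).trace ^ 2 ≤ (A * Aᵀ).trace * (Bᵀ * B).trace := by
  simp only [trace, diag, mul_apply, transpose_apply, ← Finset.sum_product', ← sq]
  exact Finset.sum_mul_sq_le_sq_mul_sq _ _ _

lemma PosSemidef.trace_mul_mul_self_nonneg {A S : Matrix ι ι ℝ} (hA : A.PosSemidef)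
    (hS : S.IsHermitian) : 0 ≤ (A * (S * S)).trace := by
  rw [← Matrix.mul_assoc, trace_mul_comm, ← Matrix.mul_assoc]
  simpa only [hS.eq] using (hA.conjTranspose_mul_mul_same S).trace_nonneg

variable [DecidableEq ι]

lemma PosDef.sq_trace_le_trace_mul_trace_inv_mul {M S : Matrix ι ι ℝ} (hM : M.PosDef)
    (hS : S.IsHermitian) : S.trace ^ 2 ≤ M.trace * (M⁻¹ * (S * S)).trace := by
  obtain ⟨T, hT, hTT⟩ : ∃ T : Matrix ι ι ℝ, T.PosDef ∧ T * T = M :=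
    ⟨CFC.sqrt M, hM.isStrictlyPositive.sqrt.posDef, CFC.sqrt_mul_sqrt_self M hM.posSemidef.nonneg⟩
  have hTdet : IsUnit T.det := (isUnit_iff_isUnit_det T).1 hT.isUnit
  have hMinv : M⁻¹ = T⁻¹ * T⁻¹ := by rw [← hTT, mul_inv_rev]
  calc S.trace ^ 2 = (T * (T⁻¹ * S)).trace ^ 2 := by rw [mul_nonsing_inv_cancel_left T S hTdet]
    _ ≤ (T * Tᵀ).trace * ((T⁻¹ * S)ᵀ * (T⁻¹ * S)).trace := sq_trace_mul_le _ _
    _ = M.trace * (S * (M⁻¹ * S)).trace := by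
        rw [transpose_mul, transpose_nonsing_inv, (isHermitian_iff_isSymm.1 hT.isHermitian).eq,
          (isHermitian_iff_isSymm.1 hS).eq, hTT, hMinv]
        simp only [Matrix.mul_assoc]
    _ = M.trace * (M⁻¹ * (S * S)).trace := by rw [trace_mul_comm, Matrix.mul_assoc]

lemma inv_smul_mul_mul_self {K : Type*} [Field K] {S : Matrix ι ι K} (hS : IsUnit S) {c : K}
    (hc : c ≠ 0) : (c • S)⁻¹ * (S * S) = c⁻¹ • S := by
  have : Invertible c := invertibleOfNonzero hc
  have hdet := (isUnit_iff_isUnit_det S).1 hS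
  rw [inv_smul S c hdet, invOf_eq_inv, smul_mul, ← Matrix.mul_assoc, nonsing_inv_mul S hdet,
    Matrix.one_mul]

end Matrix

theorem stmt6_general {n : ℕ}
    (C S : Matrix (Fin n) (Fin n) ℝ)
    (hS : S.PosDef) (hSsq : S * S = C) :
    (∀ M : Matrix (Fin n) (Fin n) ℝ, M.PosDef → M.trace ≤ 1 →
        S.trace ^ 2 ≤ (M⁻¹ * C).trace)
      ∧ ((S.trace)⁻¹ • S).PosDef
      ∧ ((S.trace)⁻¹ • S).trace ≤ 1
      ∧ ((((S.trace)⁻¹ • S))⁻¹ * C).trace = S.trace ^ 2 := by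
  subst hSsq
  rcases isEmpty_or_nonempty (Fin n) with hn | hn
  · simp only [trace, Finset.univ_eq_empty, Finset.sum_empty]
    exact ⟨fun _ _ _ => by norm_num, by rwa [Subsingleton.elim (_ • S) S], zero_le_one, by norm_num⟩
  have htrS : 0 < S.trace := hS.trace_pos
  refine ⟨fun M hM hMtr => ?_, hS.smul (inv_pos.2 htrS), ?_, ?_⟩
  · calc S.trace ^ 2 ≤ M.trace * (M⁻¹ * (S * S)).trace :=
          hM.sq_trace_le_trace_mul_trace_inv_mul hS.isHermitian
      _ ≤ (M⁻¹ * (S * S)).trace :=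
          mul_le_of_le_one_left (hM.inv.posSemidef.trace_mul_mul_self_nonneg hS.isHermitian) hMtr
  · rw [trace_smul, smul_eq_mul, inv_mul_cancel₀ htrS.ne']
  · rw [inv_smul_mul_mul_self hS.isUnit (inv_ne_zero htrS.ne'), trace_smul, inv_inv, smul_eq_mul, sq]

/-- Lemma 6 of the paper. For a symmetric positive definite `C`
with positive definite square root `S` (i.e. `S * S = C`),
`min { tr(M⁻¹ C) : M symmetric positive definite, tr(M) ≤ 1 } = (tr(C^{1/2}))²`,
attained by `M* = (tr(C^{1/2}))⁻¹ • C^{1/2}`. In particular every feasible `M`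
satisfies `tr(M⁻¹ C) ≥ (tr(C^{1/2}))²`. -/
theorem stmt6 {n : ℕ}
    (C S : Matrix (Fin n) (Fin n) ℝ)
    (hC : C.PosDef) (hS : S.PosDef) (hSsq : S * S = C) :
    (∀ M : Matrix (Fin n) (Fin n) ℝ, M.PosDef → M.trace ≤ 1 →
        S.trace ^ 2 ≤ (M⁻¹ * C).trace)
      ∧ ((S.trace)⁻¹ • S).PosDef
      ∧ ((S.trace)⁻¹ • S).trace ≤ 1
      ∧ ((((S.trace)⁻¹ • S))⁻¹ * C).trace = S.trace ^ 2 :=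
  stmt6_general C S hS hSsq
end

section
/- Let M ∈ ℝ^{n×n} be symmetric positive definite and C ∈ ℝ^{n×n} be symmetric positive semidefinite. Let λ₁(C) ≥ … ≥ λₙ(C) and λ₁(M) ≥ … ≥ λₙ(M) denote their eigenvalues in decreasing order. Then tr(M⁻¹ C) ≥ Σ_{i=1}^{n} λᵢ(C)/λᵢ(M). -/
/-!
Diagonalize `M = P D Pᵀ` and `C = Q F Qᵀ`. Then `tr(M⁻¹ C) = ∑ᵢⱼ dᵢ⁻¹ fⱼ Wᵢⱼ²` with `W = Pᵀ Q`
orthogonal, so `(Wᵢⱼ²)` is doubly stochastic. By Birkhoff's theorem this bilinear expression is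
bounded below by its minimum over permutation matrices, `min_σ ∑ᵢ dᵢ⁻¹ f_{σ i}`, and the
rearrangement inequality says that this minimum pairs the decreasing `fᵢ` with the increasing
`dᵢ⁻¹`.
-/

open Matrix

section
variable {ι R : Type*} [Fintype ι] [DecidableEq ι]

theorem le_dotProduct_mulVec_of_mem_doublyStochastic [Field R] [LinearOrder R]
    [IsStrictOrderedRing R] {a b : ι → R} {c : R} (h : ∀ σ : Equiv.Perm ι, c ≤ a ⬝ᵥ (b ∘ σ))
    {d : Matrix ι ι R} (hd : d ∈ doublyStochastic R ι) : c ≤ a ⬝ᵥ (d *ᵥ b) := by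
  obtain ⟨w, hw_nonneg, hw_sum, rfl⟩ := exists_eq_sum_perm_of_mem_doublyStochastic hd
  calc c = ∑ σ, w σ * c := by rw [← Finset.sum_mul, hw_sum, one_mul]
    _ ≤ ∑ σ, w σ * (a ⬝ᵥ (b ∘ σ)) :=
      Finset.sum_le_sum fun σ _ ↦ mul_le_mul_of_nonneg_left (h σ) (hw_nonneg σ)
    _ = a ⬝ᵥ ((∑ σ, w σ • σ.permMatrix R) *ᵥ b) := by
      simp only [sum_mulVec, smul_mulVec, permMatrix_mulVec, dotProduct_sum, dotProduct_smul,
        smul_eq_mul]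

theorem of_sq_mem_doublyStochastic_of_mem_unitaryGroup [CommRing R] [StarRing R] [TrivialStar R]
    [LinearOrder R] [IsStrictOrderedRing R] {U : Matrix ι ι R} (hU : U ∈ unitaryGroup ι R) :
    of (fun i j ↦ U i j ^ 2) ∈ doublyStochastic R ι := by
  rw [mem_doublyStochastic_iff_sum]
  refine ⟨fun i j ↦ sq_nonneg _, fun i ↦ ?_, fun j ↦ ?_⟩
  · simpa [mul_apply, sq] using congr_fun₂ (mem_unitaryGroup_iff.mp hU) i i
  · simpa [mul_apply, sq] using congr_fun₂ (mem_unitaryGroup_iff'.mp hU) j j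

theorem trace_diagonal_mul_diagonal_mul_transpose [CommRing R] (a b : ι → R) (W : Matrix ι ι R) :
    (diagonal a * W * diagonal b * Wᵀ).trace = a ⬝ᵥ (of (fun i j ↦ W i j ^ 2) *ᵥ b) := by
  simp only [trace, diag_apply, mul_apply (M := _ * diagonal b), mul_diagonal, diagonal_mul,
    transpose_apply, dotProduct, mulVec, of_apply, Finset.mul_sum]
  refine Finset.sum_congr rfl fun i _ ↦ Finset.sum_congr rfl fun j _ ↦ ?_
  ring

theorem trace_conj_diagonal_mul_conj_diagonal [CommRing R] (P Q : Matrix ι ι R) (a b : ι → R) :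
    (P * diagonal a * Pᵀ * (Q * diagonal b * Qᵀ)).trace =
      a ⬝ᵥ (of (fun i j ↦ (Pᵀ * Q) i j ^ 2) *ᵥ b) := by
  rw [← trace_diagonal_mul_diagonal_mul_transpose, transpose_mul, transpose_transpose,
    Matrix.mul_assoc P, Matrix.mul_assoc P, trace_mul_comm]
  simp only [Matrix.mul_assoc]

end

theorem Antivary.sum_comp_mul_comp_le_sum_mul_comp_perm {ι α : Type*} [Fintype ι]
    [CommRing α] [LinearOrder α] [IsStrictOrderedRing α] {a b : ι → α} {p q : Equiv.Perm ι}
    (h : Antivary (a ∘ p) (b ∘ q)) (σ : Equiv.Perm ι) :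
    ∑ i, a (p i) * b (q i) ≤ ∑ i, a i * b (σ i) :=
  calc ∑ i, a (p i) * b (q i) ≤ ∑ i, a (p i) * b (q ((q.symm * σ * p) i)) :=
        h.sum_mul_le_sum_mul_comp_perm
    _ = ∑ i, a i * b (σ i) := by
        simp only [Equiv.Perm.mul_apply, Equiv.apply_symm_apply]
        exact Equiv.sum_comp p fun i ↦ a i * b (σ i)

theorem Matrix.IsHermitian.inv_eq_conj_diagonal_inv {ι 𝕜 : Type*} [Fintype ι] [DecidableEq ι]
    [RCLike 𝕜] {A : Matrix ι ι 𝕜} (hA : A.IsHermitian) (h : ∀ i, hA.eigenvalues i ≠ 0) :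
    A⁻¹ = Unitary.conjStarAlgAut 𝕜 _ hA.eigenvectorUnitary
      (diagonal (RCLike.ofReal ∘ (hA.eigenvalues)⁻¹)) := by
  refine inv_eq_left_inv ?_
  conv_lhs => arg 2; rw [hA.spectral_theorem]
  rw [← map_mul, diagonal_mul_diagonal]
  simp [h]

/-- For `M` symmetric positive definite and `C` symmetric positive
semidefinite, with eigenvalues listed in decreasing order `μ₁ ≥ … ≥ μₙ` (of `M`)
and `λ₁ ≥ … ≥ λₙ` (of `C`), one has `tr(M⁻¹ C) ≥ Σᵢ λᵢ/μᵢ`. The decreasing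
enumerations are specified as antitone permutations of Mathlib's eigenvalue
functions. -/
theorem stmt7 {n : ℕ}
    (M C : Matrix (Fin n) (Fin n) ℝ)
    (hM : M.PosDef) (hC : C.PosSemidef)
    (μ lam : Fin n → ℝ)
    (hμanti : Antitone μ) (hlamanti : Antitone lam)
    (pμ : Equiv.Perm (Fin n)) (hμ : μ = hM.1.eigenvalues ∘ pμ)
    (plam : Equiv.Perm (Fin n)) (hlam : lam = hC.1.eigenvalues ∘ plam) :
    ∑ i, lam i / μ i ≤ (M⁻¹ * C).trace := by
  set P : Matrix (Fin n) (Fin n) ℝ := ↑hM.1.eigenvectorUnitary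
  set Q : Matrix (Fin n) (Fin n) ℝ := ↑hC.1.eigenvectorUnitary
  have hM_inv : M⁻¹ = P * diagonal hM.1.eigenvalues⁻¹ * Pᵀ := by
    simpa [star_eq_conjTranspose] using
      hM.1.inv_eq_conj_diagonal_inv fun i ↦ (hM.eigenvalues_pos i).ne'
  have hC_eq : C = Q * diagonal hC.1.eigenvalues * Qᵀ := by
    simpa [star_eq_conjTranspose] using hC.1.spectral_theorem
  have hW : Pᵀ * Q ∈ unitaryGroup (Fin n) ℝ :=
    (star hM.1.eigenvectorUnitary * hC.1.eigenvectorUnitary).2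
  subst hμ hlam
  have hanti : Antivary (hM.1.eigenvalues⁻¹ ∘ pμ) (hC.1.eigenvalues ∘ plam) :=
    Monotone.antivary (fun i j hij ↦ inv_anti₀ (hM.eigenvalues_pos _) (hμanti hij)) hlamanti
  calc ∑ i, (hC.1.eigenvalues ∘ plam) i / (hM.1.eigenvalues ∘ pμ) i
      = ∑ i, hM.1.eigenvalues⁻¹ (pμ i) * hC.1.eigenvalues (plam i) := by
        simp only [Function.comp_apply, Pi.inv_apply, div_eq_inv_mul]
    _ ≤ hM.1.eigenvalues⁻¹ ⬝ᵥ (of (fun i j ↦ (Pᵀ * Q) i j ^ 2) *ᵥ hC.1.eigenvalues) :=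
        le_dotProduct_mulVec_of_mem_doublyStochastic hanti.sum_comp_mul_comp_le_sum_mul_comp_perm
          (of_sq_mem_doublyStochastic_of_mem_unitaryGroup hW)
    _ = (M⁻¹ * C).trace := by
        rw [← trace_conj_diagonal_mul_conj_diagonal, ← hM_inv, ← hC_eq]
end

section
/- Let k < n, let Q ∈ ℝ^{n×k} satisfy QᵀQ = I_k, let B ∈ ℝ^{k×k} be symmetric positive definite, let a > 0, and let C ∈ ℝ^{n×n} be symmetric. Set A = Q B Qᵀ + a(I − QQᵀ) and C̃ = Qᵀ C Q. Then tr(A) = tr(B) + a(n−k) and tr(A⁻¹ C) = tr(B⁻¹ C̃) + a⁻¹ (tr(C) − tr(C̃)). -/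
/-!
Since `QᵀQ = 1`, the matrices `Q X Qᵀ + a • (1 - QQᵀ)` multiply blockwise,
`(Q X Qᵀ + a • P) (Q Y Qᵀ + b • P) = Q (X Y) Qᵀ + (a b) • P` with `P = 1 - QQᵀ`, so the inverse of
the sketched conditioner is obtained by inverting `B` and `a` separately. Cyclicity of the trace,
`tr (Q X Qᵀ C) = tr (X (Qᵀ C Q))`, then gives `tr (A C)` for any `A` of this shape; `tr A` is the
case `C = 1`.
-/

open Matrix

namespace Matrix

variable {m n R : Type*} [Fintype m] [Fintype n] [DecidableEq n]

def sketchedConditioner [CommRing R] (Q : Matrix n m R) (B : Matrix m m R) (a : R) :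
    Matrix n n R :=
  Q * B * Qᵀ + a • (1 - Q * Qᵀ)

section CommRing

variable [CommRing R] {Q : Matrix n m R}

theorem transpose_mul_one_sub_mul_transpose [DecidableEq m] (hQ : Qᵀ * Q = 1) :
    Qᵀ * (1 - Q * Qᵀ) = 0 := by
  rw [Matrix.mul_sub, Matrix.mul_one, ← Matrix.mul_assoc, hQ, Matrix.one_mul, sub_self]

theorem one_sub_mul_transpose_mul [DecidableEq m] (hQ : Qᵀ * Q = 1) :
    (1 - Q * Qᵀ) * Q = 0 := by
  rw [Matrix.sub_mul, Matrix.one_mul, Matrix.mul_assoc, hQ, Matrix.mul_one, sub_self]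

theorem isIdempotentElem_one_sub_mul_transpose [DecidableEq m] (hQ : Qᵀ * Q = 1) :
    IsIdempotentElem (1 - Q * Qᵀ) := by
  rw [IsIdempotentElem, Matrix.mul_sub, Matrix.mul_one, ← Matrix.mul_assoc,
    one_sub_mul_transpose_mul hQ, Matrix.zero_mul, sub_zero]

theorem sketchedConditioner_mul [DecidableEq m] (hQ : Qᵀ * Q = 1) (X Y : Matrix m m R) (a b : R) :
    sketchedConditioner Q X a * sketchedConditioner Q Y b =
      sketchedConditioner Q (X * Y) (a * b) := by
  have hQQ (M : Matrix m n R) : Qᵀ * (Q * M) = M := by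
    rw [← Matrix.mul_assoc, hQ, Matrix.one_mul]
  have hPQ (M : Matrix m n R) : (1 - Q * Qᵀ) * (Q * M) = 0 := by
    rw [← Matrix.mul_assoc, one_sub_mul_transpose_mul hQ, Matrix.zero_mul]
  simp only [sketchedConditioner, Matrix.add_mul, Matrix.mul_add, Matrix.smul_mul,
    Matrix.mul_smul, Matrix.mul_assoc, hQQ, hPQ, transpose_mul_one_sub_mul_transpose hQ,
    (isIdempotentElem_one_sub_mul_transpose hQ).eq, Matrix.mul_zero, smul_zero, add_zero,
    zero_add, smul_smul, mul_comm b a]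

theorem trace_sketchedConditioner_mul (Q : Matrix n m R) (B : Matrix m m R) (a : R)
    (C : Matrix n n R) :
    (sketchedConditioner Q B a * C).trace
      = (B * (Qᵀ * C * Q)).trace + a * (C.trace - (Qᵀ * C * Q).trace) := by
  rw [sketchedConditioner, Matrix.add_mul, trace_add, Matrix.smul_mul, trace_smul, Matrix.sub_mul,
    Matrix.one_mul, trace_sub, smul_eq_mul, Matrix.mul_assoc Q Qᵀ, trace_mul_comm Q,
    Matrix.mul_assoc (Q * B), trace_mul_comm (Q * B), ← Matrix.mul_assoc, trace_mul_comm]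

end CommRing

theorem inv_sketchedConditioner [Field R] [DecidableEq m] {Q : Matrix n m R} (hQ : Qᵀ * Q = 1)
    {B : Matrix m m R} (hB : IsUnit B) {a : R} (ha : a ≠ 0) :
    (sketchedConditioner Q B a)⁻¹ = sketchedConditioner Q B⁻¹ a⁻¹ := by
  refine inv_eq_right_inv ?_
  rw [sketchedConditioner_mul hQ, mul_nonsing_inv _ ((isUnit_iff_isUnit_det B).mp hB),
    mul_inv_cancel₀ ha]
  simp [sketchedConditioner]

end Matrix

theorem stmt9_general {n k : ℕ}
    (Q : Matrix (Fin n) (Fin k) ℝ) (hQ : Qᵀ * Q = 1)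
    (B : Matrix (Fin k) (Fin k) ℝ) (hB : B.PosDef)
    (a : ℝ) (ha : 0 < a)
    (C : Matrix (Fin n) (Fin n) ℝ)
    (A : Matrix (Fin n) (Fin n) ℝ)
    (hA : A = Q * B * Qᵀ + a • (1 - Q * Qᵀ))
    (Ct : Matrix (Fin k) (Fin k) ℝ) (hCt : Ct = Qᵀ * C * Q) :
    A.trace = B.trace + a * ((n : ℝ) - (k : ℝ))
      ∧ (A⁻¹ * C).trace = (B⁻¹ * Ct).trace + a⁻¹ * (C.trace - Ct.trace) := by
  change A = sketchedConditioner Q B a at hA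
  subst hA hCt
  constructor
  · simpa [hQ] using trace_sketchedConditioner_mul Q B a 1
  · rw [inv_sketchedConditioner hQ hB.isUnit ha.ne', trace_sketchedConditioner_mul]

/-- For the sketched conditioner `A = Q B Qᵀ + a (I − Q Qᵀ)`
(with `QᵀQ = I`, `B` symmetric positive definite, `a > 0`) and any symmetric
`C ∈ ℝ^{n×n}`, writing `C̃ = Qᵀ C Q`, one has `tr(A) = tr(B) + a(n−k)` and
`tr(A⁻¹ C) = tr(B⁻¹ C̃) + a⁻¹ (tr(C) − tr(C̃))`. -/
theorem stmt9 {n k : ℕ} (hk : k < n)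
    (Q : Matrix (Fin n) (Fin k) ℝ) (hQ : Qᵀ * Q = 1)
    (B : Matrix (Fin k) (Fin k) ℝ) (hB : B.PosDef)
    (a : ℝ) (ha : 0 < a)
    (C : Matrix (Fin n) (Fin n) ℝ) (hCsymm : C.IsSymm)
    (A : Matrix (Fin n) (Fin n) ℝ)
    (hA : A = Q * B * Qᵀ + a • (1 - Q * Qᵀ))
    (Ct : Matrix (Fin k) (Fin k) ℝ) (hCt : Ct = Qᵀ * C * Q) :
    A.trace = B.trace + a * ((n : ℝ) - (k : ℝ))
      ∧ (A⁻¹ * C).trace = (B⁻¹ * Ct).trace + a⁻¹ * (C.trace - Ct.trace) :=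
  stmt9_general Q hQ B hB a ha C A hA Ct hCt
end

section
/- Let C ∈ ℝ^{n×n} be symmetric positive semidefinite of the form C = X̄ X̄ᵀ, with rank(C) ≥ k, and let Q ∈ ℝ^{n×k} have orthonormal columns. Set C̃ = Qᵀ C Q and B = C̃^{1/2}. Then tr(B) = tr(B⁻¹ C̃) = tr(C̃^{1/2}), and tr(C̃^{1/2}) ≤ tr(C_k^{1/2}), where C_k is the best rank-k approximation of C. -/
/-!
Write `B = V diag(b) Vᵀ` with `b` decreasing, so that `tr B = ∑ bᵢ` and `C̃ = V diag(b²) Vᵀ`.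
The key inequality `bᵢ² ≤ λᵢ` is one half of Cauchy interlacing for the compression `Qᵀ C Q`, proved
by the Courant–Fischer argument: the image under `Q V` of the first `i + 1` coordinate vectors
is an `(i + 1)`-dimensional space on which the Rayleigh quotient of `C` is at least `bᵢ²`, and it
meets the span of the eigenvectors of `C` for `λᵢ, λᵢ₊₁, …`, on which that quotient is at most `λᵢ`.
The identity `tr B = tr(B⁻¹ C̃)` is just `B⁻¹ B² = B`.
-/

open Matrix BigOperators

namespace Matrix

section Quadratic

variable {m n : Type*} [Fintype m] [Fintype n]

lemma dotProduct_transpose_mul_mul_mulVec (A : Matrix m n ℝ) (M : Matrix m m ℝ) (y : n → ℝ) :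
    y ⬝ᵥ ((Aᵀ * M * A) *ᵥ y) = (A *ᵥ y) ⬝ᵥ (M *ᵥ (A *ᵥ y)) := by
  rw [← mulVec_mulVec, ← mulVec_mulVec, dotProduct_mulVec, vecMul_transpose]

variable [DecidableEq n]

lemma dotProduct_diagonal_mulVec (μ y : n → ℝ) :
    y ⬝ᵥ (diagonal μ *ᵥ y) = ∑ l, μ l * y l ^ 2 := by
  simp only [dotProduct, mulVec_diagonal]
  exact Finset.sum_congr rfl fun l _ => by ring

lemma trace_mul_diagonal_mul_transpose {V : Matrix n n ℝ} (hV : Vᵀ * V = 1) (b : n → ℝ) :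
    (V * diagonal b * Vᵀ).trace = ∑ j, b j := by
  rw [trace_mul_cycle, hV, one_mul, trace_diagonal]

lemma PosSemidef.nonneg_of_eq_mul_diagonal_mul_transpose {A V : Matrix n n ℝ} {b : n → ℝ}
    (hA : A.PosSemidef) (hV : Vᵀ * V = 1) (h : A = V * diagonal b * Vᵀ) (j : n) : 0 ≤ b j := by
  have hdiag : Vᵀ * A * V = diagonal b := by
    rw [h, ← mul_assoc, ← mul_assoc, hV, one_mul, mul_assoc, hV, mul_one]
  have := (hA.conjTranspose_mul_mul_same V).diag_nonneg (i := j)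
  rwa [conjTranspose_eq_transpose_of_trivial, hdiag, diagonal_apply_eq] at this

end Quadratic

lemma IsHermitian.exists_orthogonal_antitone_diagonalization {k : ℕ}
    {A : Matrix (Fin k) (Fin k) ℝ} (hA : A.IsHermitian) :
    ∃ (V : Matrix (Fin k) (Fin k) ℝ) (b : Fin k → ℝ),
      Vᵀ * V = 1 ∧ Antitone b ∧ A = V * diagonal b * Vᵀ := by
  set U : Matrix (Fin k) (Fin k) ℝ := ↑hA.eigenvectorUnitary
  have hUU : Uᵀ * U = 1 := by
    simpa only [star_eq_conjTranspose, conjTranspose_eq_transpose_of_trivial] using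
      Unitary.coe_star_mul_self hA.eigenvectorUnitary
  have hA' : A = U * diagonal hA.eigenvalues * Uᵀ := by
    simpa only [Unitary.conjStarAlgAut_apply, star_eq_conjTranspose,
      conjTranspose_eq_transpose_of_trivial, RCLike.ofReal_real_eq_id, Function.id_comp]
      using hA.spectral_theorem
  set σ := Tuple.sort (OrderDual.toDual ∘ hA.eigenvalues)
  refine ⟨U.submatrix id σ, hA.eigenvalues ∘ σ, ?_, ?_, ?_⟩
  · rw [transpose_submatrix, ← submatrix_mul _ _ _ _ _ Function.bijective_id, hUU,
      submatrix_one_equiv]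
  · exact monotone_toDual_comp_iff.mp (Tuple.monotone_sort (OrderDual.toDual ∘ hA.eigenvalues))
  · rw [← submatrix_diagonal_equiv, transpose_submatrix, submatrix_mul_equiv,
      submatrix_mul_equiv, submatrix_id_id]
    exact hA'

lemma exists_ne_zero_mulVec_eq_zero_of_lt {K : Type*} [Field K] {n p : ℕ} (hp : p ≤ n)
    (M : Matrix (Fin n) (Fin (p + 1)) K) :
    ∃ y ≠ 0, ∀ t : Fin n, (t : ℕ) < p → (M *ᵥ y) t = 0 := by
  set f := LinearMap.funLeft K K (Fin.castLE hp) ∘ₗ M.mulVecLin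
  obtain ⟨y, hy, hy0⟩ := Submodule.exists_mem_ne_zero_of_ne_bot <|
    LinearMap.ker_ne_bot_of_finrank_lt (f := f) (by simp)
  exact ⟨y, hy0, fun t ht => congrFun hy ⟨t, ht⟩⟩

section Interlacing

variable {n : ℕ} {U : Matrix (Fin n) (Fin n) ℝ} {d : Fin n → ℝ}

lemma dotProduct_mulVec_le_of_forall_lt_eq_zero (hU : Uᵀ * U = 1) (hd : Antitone d)
    {p : Fin n} {x : Fin n → ℝ} (hx : ∀ t < p, (Uᵀ *ᵥ x) t = 0) :
    x ⬝ᵥ ((U * diagonal d * Uᵀ) *ᵥ x) ≤ d p * (x ⬝ᵥ x) := by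
  set z := Uᵀ *ᵥ x
  have hxx : x ⬝ᵥ x = ∑ t, z t ^ 2 := by
    calc x ⬝ᵥ x = x ⬝ᵥ ((Uᵀᵀ * 1 * Uᵀ) *ᵥ x) := by
          rw [transpose_transpose, mul_one, mul_eq_one_comm.mp hU, one_mulVec]
      _ = z ⬝ᵥ z := by rw [dotProduct_transpose_mul_mul_mulVec, one_mulVec]
      _ = ∑ t, z t ^ 2 := by simp only [dotProduct, sq]
  have hxCx : x ⬝ᵥ ((U * diagonal d * Uᵀ) *ᵥ x) = ∑ t, d t * z t ^ 2 := by
    rw [← dotProduct_diagonal_mulVec, ← dotProduct_transpose_mul_mul_mulVec, transpose_transpose]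
  rw [hxCx, hxx, Finset.mul_sum]
  refine Finset.sum_le_sum fun t _ => ?_
  rcases lt_or_ge t p with htp | hpt
  · simp [hx t htp]
  · exact mul_le_mul_of_nonneg_right (hd hpt) (sq_nonneg _)

lemma le_of_isometry_of_le_dotProduct_mulVec (hU : Uᵀ * U = 1) (hd : Antitone d) {p : ℕ}
    (hp : p < n) {W : Matrix (Fin n) (Fin (p + 1)) ℝ} (hW : Wᵀ * W = 1) {c : ℝ}
    (hc : ∀ y, c * (y ⬝ᵥ y) ≤ y ⬝ᵥ ((Wᵀ * (U * diagonal d * Uᵀ) * W) *ᵥ y)) :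
    c ≤ d ⟨p, hp⟩ := by
  obtain ⟨y, hy0, hy⟩ := exists_ne_zero_mulVec_eq_zero_of_lt hp.le (Uᵀ * W)
  have hyy : (W *ᵥ y) ⬝ᵥ (W *ᵥ y) = y ⬝ᵥ y := by
    calc (W *ᵥ y) ⬝ᵥ (W *ᵥ y) = (W *ᵥ y) ⬝ᵥ (1 *ᵥ (W *ᵥ y)) := by rw [one_mulVec]
      _ = y ⬝ᵥ y := by rw [← dotProduct_transpose_mul_mul_mulVec, Matrix.mul_one, hW, one_mulVec]
  have hpos : 0 < y ⬝ᵥ y := by simpa using dotProduct_self_star_pos_iff.mpr hy0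
  have hup := dotProduct_mulVec_le_of_forall_lt_eq_zero hU hd (p := ⟨p, hp⟩) (x := W *ᵥ y)
    fun t ht => by rw [mulVec_mulVec]; exact hy t ht
  rw [← dotProduct_transpose_mul_mul_mulVec, hyy] at hup
  exact le_of_mul_le_mul_right ((hc y).trans hup) hpos

lemma le_of_compression_eq_mul_diagonal_mul_transpose (hU : Uᵀ * U = 1) (hd : Antitone d)
    {k : ℕ} (hk : k ≤ n) {Q : Matrix (Fin n) (Fin k) ℝ} (hQ : Qᵀ * Q = 1)
    {V : Matrix (Fin k) (Fin k) ℝ} (hV : Vᵀ * V = 1) {μ : Fin k → ℝ} (hμ : Antitone μ)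
    (h : Qᵀ * (U * diagonal d * Uᵀ) * Q = V * diagonal μ * Vᵀ) (i : Fin k) :
    μ i ≤ d (Fin.castLE hk i) := by
  set e : Fin (i + 1) → Fin k := Fin.castLE i.isLt
  set W := Q * V.submatrix id e
  have hconj : ∀ M : Matrix (Fin n) (Fin n) ℝ,
      Wᵀ * M * W = (Vᵀ * (Qᵀ * M * Q) * V).submatrix e e := by
    intro M
    rw [submatrix_mul _ _ _ id _ Function.bijective_id,
      submatrix_mul _ _ _ id _ Function.bijective_id, submatrix_id_id, ← transpose_submatrix]
    simp only [W, transpose_mul, Matrix.mul_assoc]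
  have hW : Wᵀ * W = 1 := by
    rw [← Matrix.mul_one Wᵀ, hconj, Matrix.mul_one, hQ, Matrix.mul_one, hV,
      submatrix_one _ (Fin.castLE_injective _)]
  have hWCW : Wᵀ * (U * diagonal d * Uᵀ) * W = diagonal (μ ∘ e) := by
    rw [hconj, h]
    simp only [Matrix.mul_assoc]
    rw [hV, Matrix.mul_one, ← Matrix.mul_assoc, hV, Matrix.one_mul,
      submatrix_diagonal _ _ (Fin.castLE_injective _)]
  refine le_of_isometry_of_le_dotProduct_mulVec hU hd (i.isLt.trans_le hk) hW fun y => ?_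
  rw [hWCW, dotProduct_diagonal_mulVec, dotProduct, Finset.mul_sum]
  refine Finset.sum_le_sum fun l _ => ?_
  have hli : e l ≤ i := Fin.le_iff_val_le_val.mpr (Nat.lt_succ_iff.mp l.isLt)
  rw [sq]
  exact mul_le_mul_of_nonneg_right (hμ hli) (mul_self_nonneg _)

end Interlacing

end Matrix

theorem stmt17_general {n k : ℕ} (hk : k ≤ n)
    (C : Matrix (Fin n) (Fin n) ℝ)
    (U : Matrix (Fin n) (Fin n) ℝ) (hU : Uᵀ * U = 1)
    (d : Fin n → ℝ) (hd : Antitone d)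
    (hCdec : C = U * Matrix.diagonal d * Uᵀ)
    (Q : Matrix (Fin n) (Fin k) ℝ) (hQ : Qᵀ * Q = 1)
    (B : Matrix (Fin k) (Fin k) ℝ)
    (hB : B.PosDef) (hBsq : B * B = Qᵀ * C * Q) :
    B.trace = (B⁻¹ * (Qᵀ * C * Q)).trace
      ∧ B.trace ≤ ∑ i : Fin k, Real.sqrt (d (Fin.castLE hk i)) := by
  refine ⟨by rw [← hBsq, ← Matrix.mul_assoc, nonsing_inv_mul B hB.det_pos.ne'.isUnit,
    Matrix.one_mul], ?_⟩
  obtain ⟨V, b, hV, hb, hBV⟩ := hB.1.exists_orthogonal_antitone_diagonalization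
  have hb0 := hB.posSemidef.nonneg_of_eq_mul_diagonal_mul_transpose hV hBV
  have hb2 : Antitone fun j => b j ^ 2 := fun i j hij => pow_le_pow_left₀ (hb0 j) (hb hij) 2
  have hC' : Qᵀ * (U * diagonal d * Uᵀ) * Q = V * diagonal (fun j => b j ^ 2) * Vᵀ := by
    rw [← hCdec, ← hBsq, hBV]
    simp only [Matrix.mul_assoc]
    rw [← Matrix.mul_assoc Vᵀ, hV, Matrix.one_mul, ← Matrix.mul_assoc (diagonal b),
      diagonal_mul_diagonal]
    simp only [sq]
  rw [hBV, trace_mul_diagonal_mul_transpose hV]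
  exact Finset.sum_le_sum fun i _ => (le_abs_self _).trans <| Real.abs_le_sqrt <|
    le_of_compression_eq_mul_diagonal_mul_transpose hU hd hk hQ hV hb2 hC' i

/-- Lemma 7 of the paper. Let `C = X̄ X̄ᵀ = U D Uᵀ`
(eigenvalues `d` decreasing) with `rank(C) ≥ k`, let `Q ∈ ℝ^{n×k}` have
orthonormal columns, set `C̃ = Qᵀ C Q` and let `B = C̃^{1/2}` (the positive
definite square root, invertible in this setting). Then
`tr(B) = tr(B⁻¹ C̃)` (both equal to `tr(C̃^{1/2}) = tr(B)`), and
`tr(C̃^{1/2}) ≤ tr(C_k^{1/2}) = Σ_{i<k} √λᵢ`. -/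
theorem stmt17 {n m k : ℕ} (hk : k ≤ n)
    (Xbar : Matrix (Fin n) (Fin m) ℝ)
    (C : Matrix (Fin n) (Fin n) ℝ) (hC : C = Xbar * Xbarᵀ)
    (hrank : k ≤ C.rank)
    (U : Matrix (Fin n) (Fin n) ℝ) (hU : Uᵀ * U = 1)
    (d : Fin n → ℝ) (hd : Antitone d)
    (hCdec : C = U * Matrix.diagonal d * Uᵀ)
    (Q : Matrix (Fin n) (Fin k) ℝ) (hQ : Qᵀ * Q = 1)
    (B : Matrix (Fin k) (Fin k) ℝ)
    (hB : B.PosDef) (hBsq : B * B = Qᵀ * C * Q) :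
    B.trace = (B⁻¹ * (Qᵀ * C * Q)).trace
      ∧ B.trace ≤ ∑ i : Fin k, Real.sqrt (d (Fin.castLE hk i)) :=
  stmt17_general hk C U hU d hd hCdec Q hQ B hB hBsq
end
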